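/- arXiv:1805.00887 — 4 statements merged into one kernel-verified Lean document; each statement's English description precedes it below -/
import Mathlib

section
/- Let (X,d) be a compact metric space, 𝕀 = {S_1,...,S_N} an IFS of bi-Lipschitz contractions on X with compact condensation set C, upper Lipschitz dimension s, and let d = dim_H F_C. Suppose 0 < ℋ^d(C) < ∞. If d > s, then 0 < ℋ^d(F_C) < ∞. -/
open Metric Filter Set MeasureTheory Topology
open scoped ENNReal NNReal

/-! Pick `k` with `s_k < d`; then `a_k < 1` for the word sums `a_n = ∑_{|w| = n} Lip⁺(S_w)^d`.
Since `Lip⁺` is submultiplicative under composition, so is `a`, and `∑ₙ aₙ < ∞`.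
Unfolding `F_C = ⋃ᵢ Sᵢ(F_C) ∪ C` along words shows
`F_C ⊆ ⋃_w S_w(C) ∪ ⋂ₙ ⋃_{|w| = n} S_w(F_C)`. The first set has measure at most
`(∑ₙ aₙ) ℋ^d(C) < ∞`; the level-`n` cover of the second one has `d`-cost at most
`aₙ (diam F_C)^d → 0`, so it is `ℋ^d`-null. The lower bound is `C ⊆ F_C`. -/

/-- The upper Lipschitz constant `Lip⁺(S) = sup_{x ≠ y} d(S x, S y)/d(x,y)`. -/
noncomputable def LipPlus {X : Type*} [MetricSpace X] (S : X → X) : ℝ :=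
  sSup {r : ℝ | ∃ x y : X, x ≠ y ∧ r = dist (S x) (S y) / dist x y}

/-- The lower Lipschitz constant `Lip⁻(S) = inf_{x ≠ y} d(S x, S y)/d(x,y)`. -/
noncomputable def LipMinus {X : Type*} [MetricSpace X] (S : X → X) : ℝ :=
  sInf {r : ℝ | ∃ x y : X, x ≠ y ∧ r = dist (S x) (S y) / dist x y}

/-- `S` is a bi-Lipschitz contraction: `0 < Lip⁻(S) ≤ Lip⁺(S) < 1`,
with `Lip⁺(S)` and `Lip⁻(S)` genuine upper/lower Lipschitz bounds. -/
def IsBiLipContraction {X : Type*} [MetricSpace X] (S : X → X) : Prop :=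
  (∀ x y : X, dist (S x) (S y) ≤ LipPlus S * dist x y) ∧
  (∀ x y : X, LipMinus S * dist x y ≤ dist (S x) (S y)) ∧
  0 < LipMinus S ∧ LipMinus S ≤ LipPlus S ∧ LipPlus S < 1

/-- `S_𝐢 = S_{i₁} ∘ ⋯ ∘ S_{i_k}` for a finite word `𝐢` over `{1,…,N}`. -/
def compList {X : Type*} {N : ℕ} (S : Fin N → X → X) : List (Fin N) → X → X
  | [] => id
  | i :: w => S i ∘ compList S w

theorem ENNReal.tsum_lt_top_of_submultiplicative {a : ℕ → ℝ≥0∞}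
    (ha : ∀ m n, a (m + n) ≤ a m * a n) (ha_ne_top : ∀ n, a n ≠ ⊤) {k : ℕ}
    (hk : k ≠ 0) (hak : a k < 1) : ∑' n, a n < ⊤ := by
  have : NeZero k := ⟨hk⟩
  have hgeom : ∀ p r, a (p * k + r) ≤ a k ^ p * a r := by
    intro p r
    induction p with
    | zero => simp
    | succ p ih =>
      calc a ((p + 1) * k + r) = a (k + (p * k + r)) := by ring_nf
        _ ≤ a k * (a k ^ p * a r) := (ha _ _).trans (mul_le_mul_right ih _)
        _ = a k ^ (p + 1) * a r := by ring
  calc ∑' n, a n = ∑' q : ℕ × Fin k, a (q.1 * k + q.2) :=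
        ((Nat.divModEquiv k).symm.tsum_eq a).symm
    _ ≤ ∑' q : ℕ × Fin k, a k ^ q.1 * a q.2 := ENNReal.tsum_le_tsum fun q => hgeom q.1 q.2
    _ = (∑' p, a k ^ p) * ∑ r : Fin k, a r := by
        simp_rw [ENNReal.tsum_prod', ENNReal.tsum_mul_left, tsum_fintype, ENNReal.tsum_mul_right]
    _ < ⊤ := by
        refine ENNReal.mul_lt_top ?_ (ENNReal.sum_lt_top.2 fun r _ => (ha_ne_top r).lt_top)
        rw [ENNReal.tsum_geometric]
        exact ENNReal.inv_lt_top.2 (tsub_pos_of_lt hak)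

section LipPlus

variable {X : Type*} [MetricSpace X] {f g : X → X} {K K' : ℝ≥0}

lemma lipPlus_nonneg (f : X → X) : 0 ≤ LipPlus f :=
  Real.sSup_nonneg fun _ ⟨_, _, _, hr⟩ => hr ▸ div_nonneg dist_nonneg dist_nonneg

lemma lipPlus_le {K : ℝ} (hK : 0 ≤ K) (h : ∀ x y, dist (f x) (f y) ≤ K * dist x y) :
    LipPlus f ≤ K :=
  Real.sSup_le (fun _ ⟨x, y, hxy, hr⟩ => hr ▸ (div_le_iff₀ (dist_pos.2 hxy)).2 (h x y)) hK

lemma LipschitzWith.div_dist_le_lipPlus (hf : LipschitzWith K f) {x y : X} (hxy : x ≠ y) :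
    dist (f x) (f y) / dist x y ≤ LipPlus f :=
  le_csSup ⟨K, fun _ ⟨x, y, hxy, hr⟩ =>
    hr ▸ (div_le_iff₀ (dist_pos.2 hxy)).2 (hf.dist_le_mul x y)⟩ ⟨x, y, hxy, rfl⟩

lemma LipschitzWith.dist_le_lipPlus_mul (hf : LipschitzWith K f) (x y : X) :
    dist (f x) (f y) ≤ LipPlus f * dist x y := by
  rcases eq_or_ne x y with rfl | hxy
  · simp
  · exact (div_le_iff₀ (dist_pos.2 hxy)).1 (hf.div_dist_le_lipPlus hxy)

lemma LipschitzWith.lipschitzWith_lipPlus (hf : LipschitzWith K f) :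
    LipschitzWith (LipPlus f).toNNReal f :=
  LipschitzWith.of_dist_le_mul fun x y => by
    rw [Real.coe_toNNReal _ (lipPlus_nonneg f)]
    exact hf.dist_le_lipPlus_mul x y

lemma LipschitzWith.lipPlus_pos [Nontrivial X] (hf : LipschitzWith K f)
    (hinj : Function.Injective f) : 0 < LipPlus f := by
  obtain ⟨x, y, hxy⟩ := exists_pair_ne X
  exact (div_pos (dist_pos.2 (hinj.ne hxy)) (dist_pos.2 hxy)).trans_le
    (hf.div_dist_le_lipPlus hxy)

lemma LipschitzWith.lipPlus_comp_le (hf : LipschitzWith K f) (hg : LipschitzWith K' g) :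
    LipPlus (f ∘ g) ≤ LipPlus f * LipPlus g :=
  lipPlus_le (mul_nonneg (lipPlus_nonneg f) (lipPlus_nonneg g)) fun x y =>
    calc dist (f (g x)) (f (g y)) ≤ LipPlus f * dist (g x) (g y) := hf.dist_le_lipPlus_mul _ _
      _ ≤ LipPlus f * (LipPlus g * dist x y) :=
          mul_le_mul_of_nonneg_left (hg.dist_le_lipPlus_mul x y) (lipPlus_nonneg f)
      _ = LipPlus f * LipPlus g * dist x y := (mul_assoc _ _ _).symm

end LipPlus

namespace IsBiLipContraction

variable {X : Type*} [MetricSpace X] {f : X → X}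

lemma lipschitzWith_one (hf : IsBiLipContraction f) : LipschitzWith 1 f :=
  LipschitzWith.of_dist_le_mul fun x y => by
    simpa using (hf.1 x y).trans (mul_le_of_le_one_left dist_nonneg hf.2.2.2.2.le)

lemma injective (hf : IsBiLipContraction f) : Function.Injective f := fun x y hxy => by
  have h := hf.2.1 x y
  rw [hxy, dist_self] at h
  exact dist_le_zero.1 (nonpos_of_mul_nonpos_right h hf.2.2.1)

lemma nontrivial (hf : IsBiLipContraction f) : Nontrivial X := by
  by_contra hX
  rw [not_nontrivial_iff_subsingleton] at hX
  have hempty : {r : ℝ | ∃ x y : X, x ≠ y ∧ r = dist (f x) (f y) / dist x y} = ∅ :=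
    eq_empty_iff_forall_notMem.2 fun _ ⟨x, y, hxy, _⟩ => hxy (Subsingleton.elim x y)
  have hpos := hf.2.2.1
  rw [LipMinus, hempty, Real.sInf_empty] at hpos
  exact lt_irrefl 0 hpos

end IsBiLipContraction

lemma compList_append {X : Type*} {N : ℕ} (S : Fin N → X → X) (l₁ l₂ : List (Fin N)) :
    compList S (l₁ ++ l₂) = compList S l₁ ∘ compList S l₂ := by
  induction l₁ with
  | nil => rfl
  | cons i l ih => simp only [List.cons_append, compList, ih, Function.comp_assoc]

lemma compList_ofFn_cons {X : Type*} {N n : ℕ} (S : Fin N → X → X) (i : Fin N)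
    (w : Fin n → Fin N) :
    compList S (List.ofFn (Fin.cons i w : Fin (n + 1) → Fin N)) =
      S i ∘ compList S (List.ofFn w) := by
  rw [List.ofFn_cons, compList]

section compList

variable {X : Type*} [MetricSpace X] {N : ℕ} {S : Fin N → X → X}

lemma lipschitzWith_one_compList (hS : ∀ i, IsBiLipContraction (S i)) (l : List (Fin N)) :
    LipschitzWith 1 (compList S l) := by
  induction l with
  | nil => exact LipschitzWith.id
  | cons i l ih => simpa [compList] using (hS i).lipschitzWith_one.comp ih

lemma injective_compList (hS : ∀ i, IsBiLipContraction (S i)) (l : List (Fin N)) :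
    Function.Injective (compList S l) := by
  induction l with
  | nil => exact Function.injective_id
  | cons i l ih => exact (hS i).injective.comp ih

lemma lipPlus_compList_append_le (hS : ∀ i, IsBiLipContraction (S i)) (l₁ l₂ : List (Fin N)) :
    LipPlus (compList S (l₁ ++ l₂)) ≤
      LipPlus (compList S l₁) * LipPlus (compList S l₂) := by
  rw [compList_append]
  exact (lipschitzWith_one_compList hS l₁).lipPlus_comp_le (lipschitzWith_one_compList hS l₂)

lemma exists_lipPlus_le_lt_one (hS : ∀ i, IsBiLipContraction (S i)) :
    ∃ q : ℝ≥0, q < 1 ∧ ∀ i, LipPlus (S i) ≤ q :=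
  ⟨Finset.univ.sup fun i => (LipPlus (S i)).toNNReal,
    (Finset.sup_lt_iff zero_lt_one).2 fun i _ => Real.toNNReal_lt_one.2 (hS i).2.2.2.2,
    fun i => (Real.le_coe_toNNReal _).trans <| NNReal.coe_le_coe.2 <|
      Finset.le_sup (f := fun i => (LipPlus (S i)).toNNReal) (Finset.mem_univ i)⟩

lemma lipPlus_compList_le_pow (hS : ∀ i, IsBiLipContraction (S i)) {q : ℝ}
    (hq : ∀ i, LipPlus (S i) ≤ q) (l : List (Fin N)) :
    LipPlus (compList S l) ≤ q ^ l.length := by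
  induction l with
  | nil => exact lipPlus_le zero_le_one fun x y => by simp [compList]
  | cons i l ih =>
    calc LipPlus (compList S ([i] ++ l)) ≤ LipPlus (S i) * LipPlus (compList S l) :=
          lipPlus_compList_append_le hS [i] l
      _ ≤ q * q ^ l.length :=
          mul_le_mul (hq i) ih (lipPlus_nonneg _) ((lipPlus_nonneg _).trans (hq i))
      _ = q ^ (i :: l).length := (pow_succ' q _).symm

lemma lipPlus_compList_lt_one (hS : ∀ i, IsBiLipContraction (S i)) {l : List (Fin N)}
    (hl : l ≠ []) : LipPlus (compList S l) < 1 := by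
  obtain ⟨q, hq1, hq⟩ := exists_lipPlus_le_lt_one hS
  exact (lipPlus_compList_le_pow hS hq l).trans_lt
    (pow_lt_one₀ q.2 (by exact_mod_cast hq1) (List.length_pos_iff.2 hl).ne')

end compList

noncomputable def wordLipSum {X : Type*} [MetricSpace X] {N : ℕ} (S : Fin N → X → X) (d : ℝ)
    (n : ℕ) : ℝ≥0∞ :=
  ∑ w : Fin n → Fin N, ENNReal.ofReal (LipPlus (compList S (List.ofFn w))) ^ d

section wordLipSum

variable {X : Type*} [MetricSpace X] {N : ℕ} {S : Fin N → X → X} {d : ℝ}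

lemma wordLipSum_ne_top (hd : 0 ≤ d) (n : ℕ) : wordLipSum S d n ≠ ⊤ :=
  ENNReal.sum_ne_top.2 fun _ _ => ENNReal.rpow_ne_top_of_nonneg hd ENNReal.ofReal_ne_top

lemma wordLipSum_add_le (hS : ∀ i, IsBiLipContraction (S i)) (hd : 0 ≤ d) (m n : ℕ) :
    wordLipSum S d (m + n) ≤ wordLipSum S d m * wordLipSum S d n := by
  calc wordLipSum S d (m + n)
      = ∑ p : (Fin m → Fin N) × (Fin n → Fin N),
          ENNReal.ofReal (LipPlus (compList S (List.ofFn p.1 ++ List.ofFn p.2))) ^ d := by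
        rw [wordLipSum, ← (Fin.appendEquiv m n).sum_comp]
        exact Finset.sum_congr rfl fun p _ => by rw [← List.ofFn_fin_append]; rfl
    _ ≤ ∑ p : (Fin m → Fin N) × (Fin n → Fin N),
          ENNReal.ofReal (LipPlus (compList S (List.ofFn p.1))) ^ d *
            ENNReal.ofReal (LipPlus (compList S (List.ofFn p.2))) ^ d := by
        refine Finset.sum_le_sum fun p _ => ?_
        rw [← ENNReal.mul_rpow_of_nonneg _ _ hd, ← ENNReal.ofReal_mul (lipPlus_nonneg _)]
        gcongr
        exact lipPlus_compList_append_le hS _ _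
    _ = wordLipSum S d m * wordLipSum S d n := by
        rw [wordLipSum, wordLipSum, Finset.sum_mul_sum, ← Fintype.sum_prod_type']

lemma wordLipSum_lt_one (hS : ∀ i, IsBiLipContraction (S i)) {k : ℕ} (hk : k ≠ 0) {t : ℝ}
    (ht : ∑ w : Fin k → Fin N, LipPlus (compList S (List.ofFn w)) ^ t = 1) (htd : t < d) :
    wordLipSum S d k < 1 := by
  have hne : (Finset.univ : Finset (Fin k → Fin N)).Nonempty :=
    Finset.nonempty_of_sum_ne_zero (ht ▸ one_ne_zero)
  have := (hS (hne.choose ⟨0, Nat.pos_of_ne_zero hk⟩)).nontrivial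
  have hpos : ∀ w : Fin k → Fin N, 0 < LipPlus (compList S (List.ofFn w)) := fun w =>
    (lipschitzWith_one_compList hS _).lipPlus_pos (injective_compList hS _)
  have hlt : ∀ w : Fin k → Fin N, LipPlus (compList S (List.ofFn w)) < 1 := fun w =>
    lipPlus_compList_lt_one hS (by simpa using hk)
  have hsum : ∑ w : Fin k → Fin N, LipPlus (compList S (List.ofFn w)) ^ d < 1 :=
    ht ▸ Finset.sum_lt_sum_of_nonempty hne fun w _ =>
      Real.rpow_lt_rpow_of_exponent_gt (hpos w) (hlt w) htd
  calc wordLipSum S d k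
      = ENNReal.ofReal (∑ w : Fin k → Fin N, LipPlus (compList S (List.ofFn w)) ^ d) := by
        rw [ENNReal.ofReal_sum_of_nonneg fun w _ => (Real.rpow_pos_of_pos (hpos w) d).le]
        exact Finset.sum_congr rfl fun w _ => ENNReal.ofReal_rpow_of_pos (hpos w)
    _ < 1 := ENNReal.ofReal_lt_one.2 hsum

end wordLipSum

lemma subset_iUnion_compList_image_union_iInter {X : Type*} {N : ℕ} {S : Fin N → X → X}
    {C F : Set X} (hF : F ⊆ (⋃ i, S i '' F) ∪ C) :
    F ⊆ (⋃ m, ⋃ w : Fin m → Fin N, compList S (List.ofFn w) '' C) ∪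
      ⋂ n, ⋃ w : Fin n → Fin N, compList S (List.ofFn w) '' F := by
  rw [union_iInter]
  refine subset_iInter fun n => ?_
  induction n with
  | zero => exact fun x hx => Or.inr (mem_iUnion.2 ⟨Fin.elim0, x, hx, rfl⟩)
  | succ n ih =>
    intro x hx
    rcases hF hx with hx | hx
    · obtain ⟨i, y, hy, rfl⟩ := mem_iUnion.1 hx
      rcases ih hy with hy | hy
      · obtain ⟨m, w, z, hz, rfl⟩ := mem_iUnion₂.1 hy
        refine Or.inl (mem_iUnion₂.2 ⟨m + 1, Fin.cons i w, z, hz, ?_⟩)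
        rw [compList_ofFn_cons]
        rfl
      · obtain ⟨w, z, hz, rfl⟩ := mem_iUnion.1 hy
        refine Or.inr (mem_iUnion.2 ⟨Fin.cons i w, z, hz, ?_⟩)
        rw [compList_ofFn_cons]
        rfl
    · exact Or.inl (mem_iUnion₂.2 ⟨0, Fin.elim0, x, hx, rfl⟩)

section HausdorffMeasure

variable {X : Type*} [MetricSpace X] [MeasurableSpace X] [BorelSpace X] {N : ℕ}
  {S : Fin N → X → X} {d : ℝ}

lemma hausdorffMeasure_iUnion_compList_image_le (hS : ∀ i, IsBiLipContraction (S i))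
    (hd : 0 ≤ d) (C : Set X) :
    μH[d] (⋃ m, ⋃ w : Fin m → Fin N, compList S (List.ofFn w) '' C) ≤
      (∑' m, wordLipSum S d m) * μH[d] C :=
  calc μH[d] (⋃ m, ⋃ w : Fin m → Fin N, compList S (List.ofFn w) '' C)
      ≤ ∑' m, ∑ w : Fin m → Fin N, μH[d] (compList S (List.ofFn w) '' C) :=
        (measure_iUnion_le _).trans (ENNReal.tsum_le_tsum fun m => measure_iUnion_fintype_le _ _)
    _ ≤ ∑' m, ∑ w : Fin m → Fin N,
          ENNReal.ofReal (LipPlus (compList S (List.ofFn w))) ^ d * μH[d] C := by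
        gcongr with m w
        exact (lipschitzWith_one_compList hS _).lipschitzWith_lipPlus.hausdorffMeasure_image_le hd C
    _ = (∑' m, wordLipSum S d m) * μH[d] C := by
        simp_rw [← Finset.sum_mul, ENNReal.tsum_mul_right, wordLipSum]

lemma hausdorffMeasure_iInter_iUnion_compList_image_eq_zero (hS : ∀ i, IsBiLipContraction (S i))
    (hd : 0 ≤ d) {F : Set X} (hF : Bornology.IsBounded F)
    (hsum : ∑' n, wordLipSum S d n ≠ ⊤) :
    μH[d] (⋂ n, ⋃ w : Fin n → Fin N, compList S (List.ofFn w) '' F) = 0 := by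
  obtain ⟨q, hq1, hq⟩ := exists_lipPlus_le_lt_one hS
  have hdiam : ∀ {n} (w : Fin n → Fin N), ediam (compList S (List.ofFn w) '' F) ≤
      ENNReal.ofReal (LipPlus (compList S (List.ofFn w))) * ediam F := fun w =>
    (lipschitzWith_one_compList hS _).lipschitzWith_lipPlus.ediam_image_le F
  have hdiam_le : ∀ n (w : Fin n → Fin N),
      ediam (compList S (List.ofFn w) '' F) ≤ (q : ℝ≥0∞) ^ n * ediam F := fun n w => by
    refine (hdiam w).trans (mul_le_mul_left ?_ _)
    rw [← ENNReal.coe_pow, ← ENNReal.ofReal_coe_nnreal, NNReal.coe_pow]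
    simpa using ENNReal.ofReal_le_ofReal (lipPlus_compList_le_pow hS hq (List.ofFn w))
  have hdiam_lim : Tendsto (fun n => (q : ℝ≥0∞) ^ n * ediam F) atTop (𝓝 0) := by
    simpa using ENNReal.Tendsto.mul_const (ENNReal.tendsto_pow_atTop_nhds_zero_of_lt_one
      (ENNReal.coe_lt_one_iff.2 hq1)) (Or.inr hF.ediam_ne_top)
  have hcost_lim : Tendsto (fun n => wordLipSum S d n * ediam F ^ d) atTop (𝓝 0) := by
    simpa using ENNReal.Tendsto.mul_const (ENNReal.tendsto_atTop_zero_of_tsum_ne_top hsum)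
      (Or.inr (ENNReal.rpow_ne_top_of_nonneg hd hF.ediam_ne_top))
  refine le_antisymm ?_ zero_le
  calc μH[d] (⋂ n, ⋃ w : Fin n → Fin N, compList S (List.ofFn w) '' F)
      ≤ liminf (fun n => ∑ w : Fin n → Fin N, ediam (compList S (List.ofFn w) '' F) ^ d)
          atTop :=
        Measure.hausdorffMeasure_le_liminf_sum d _ _ hdiam_lim _
          (Eventually.of_forall hdiam_le) (Eventually.of_forall fun n => iInter_subset _ n)
    _ ≤ liminf (fun n => wordLipSum S d n * ediam F ^ d) atTop := by
        refine liminf_le_liminf (Eventually.of_forall fun n => ?_)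
        rw [wordLipSum, Finset.sum_mul]
        refine Finset.sum_le_sum fun w _ => ?_
        rw [← ENNReal.mul_rpow_of_nonneg _ _ hd]
        exact ENNReal.rpow_le_rpow (hdiam w) hd
    _ = 0 := hcost_lim.liminf_eq

end HausdorffMeasure

theorem hausdorff_measure_inhomogeneous_attractor_above_lip_dim_general
    {X : Type*} [MetricSpace X] [MeasurableSpace X] [BorelSpace X]
    {N : ℕ} (S : Fin N → X → X) (hS : ∀ i, IsBiLipContraction (S i))
    (C : Set X)
    (FC : Set X) (hFCc : IsCompact FC)
    (hFC : FC = (⋃ i, S i '' FC) ∪ C)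
    (sk : ℕ → ℝ)
    (hsk : ∀ k, 1 ≤ k → ∑ w : Fin k → Fin N, LipPlus (compList S (List.ofFn w)) ^ sk k = 1)
    (s : ℝ) (hs : Filter.Tendsto sk Filter.atTop (𝓝 s))
    (d : ℝ) (hd0 : 0 ≤ d)
    (hC0 : 0 < μH[d] C) (hC1 : μH[d] C < ⊤)
    (hds : s < d) :
    0 < μH[d] FC ∧ μH[d] FC < ⊤ := by
  obtain ⟨k, hkd, hk⟩ := ((hs.eventually_lt_const hds).and (eventually_ne_atTop 0)).exists
  have hsum : ∑' n, wordLipSum S d n < ⊤ :=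
    ENNReal.tsum_lt_top_of_submultiplicative (wordLipSum_add_le hS hd0) (wordLipSum_ne_top hd0)
      hk (wordLipSum_lt_one hS hk (hsk k (Nat.one_le_iff_ne_zero.2 hk)) hkd)
  refine ⟨hC0.trans_le (measure_mono (hFC ▸ subset_union_right)), ?_⟩
  calc μH[d] FC
      ≤ μH[d] (⋃ m, ⋃ w : Fin m → Fin N, compList S (List.ofFn w) '' C) +
          μH[d] (⋂ n, ⋃ w : Fin n → Fin N, compList S (List.ofFn w) '' FC) :=
        (measure_mono (subset_iUnion_compList_image_union_iInter hFC.le)).trans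
          (measure_union_le _ _)
    _ ≤ (∑' m, wordLipSum S d m) * μH[d] C := by
        rw [hausdorffMeasure_iInter_iUnion_compList_image_eq_zero hS hd0 hFCc.isBounded hsum.ne,
          add_zero]
        exact hausdorffMeasure_iUnion_compList_image_le hS hd0 C
    _ < ⊤ := ENNReal.mul_lt_top hsum hC1

/-- **Theorem 2.4 (i).** If `d = dim_H F_C > s` and `0 < ℋ^d(C) < ∞`, then
`0 < ℋ^d(F_C) < ∞`. -/
theorem hausdorff_measure_inhomogeneous_attractor_above_lip_dim
    {X : Type*} [MetricSpace X] [CompactSpace X] [MeasurableSpace X] [BorelSpace X]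
    {N : ℕ} (S : Fin N → X → X) (hS : ∀ i, IsBiLipContraction (S i))
    (C : Set X) (hCc : IsCompact C)
    (FC : Set X) (hFCc : IsCompact FC) (hFCne : FC.Nonempty)
    (hFC : FC = (⋃ i, S i '' FC) ∪ C)
    (sk : ℕ → ℝ)
    (hsk : ∀ k, 1 ≤ k → ∑ w : Fin k → Fin N, LipPlus (compList S (List.ofFn w)) ^ sk k = 1)
    (s : ℝ) (hs : Filter.Tendsto sk Filter.atTop (𝓝 s))
    (d : ℝ) (hd0 : 0 ≤ d) (hd : dimH FC = ENNReal.ofReal d)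
    (hC0 : 0 < μH[d] C) (hC1 : μH[d] C < ⊤)
    (hds : s < d) :
    0 < μH[d] FC ∧ μH[d] FC < ⊤ :=
  hausdorff_measure_inhomogeneous_attractor_above_lip_dim_general S hS C FC hFCc hFC sk hsk s hs d
    hd0 hC0 hC1 hds
end

section
/- Let (X,d) be a compact metric space, 𝕀 = {S_1,...,S_N} an IFS consisting of contracting similarities on X with compact condensation set C and similarity dimension s, and let d = dim_H F_C. If 𝕀 satisfies the COSC and 0 < ℋ^d(C) < ∞, then: if d ≤ s then ℋ^d(F_C) = ∞, and otherwise ℋ^d(F_C) = ℋ^d(C) / (1 − ∑_{i=1}^N Lip(S_i)^d). -/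
/-!
By the COSC, `L_k = ⋃_{|w| < k} S_w(C)` is the disjoint union of `C` and the sets `S_i(L_{k-1})`,
so `ℋ^d(L_k) = ℋ^d(C) ∑_{j<k} ρ^j` with `ρ = ∑ r_i^d`. Hence `ℋ^d(F_C) ≥ ℋ^d(C) / (1 - ρ)`, which is
infinite when `d ≤ s`, i.e. `ρ ≥ 1`. When `s < d`, `ρ < 1` and `F_C` is covered by `⋃_k L_k` and
`⋂_k ⋃_{|w| = k} S_w(F_C)`; the latter is `ℋ^d`-null, since its covers by the `N^k` sets `S_w(F_C)`
have `∑ diam^d ≤ ρ^k diam(F_C)^d`.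
-/

open Metric Filter Set MeasureTheory Topology

/-- The condensation open set condition. -/
def COSC {X : Type*} [MetricSpace X] {N : ℕ} (S : Fin N → X → X) (C : Set X) : Prop :=
  ∃ U : Set X, IsOpen U ∧ C ⊆ U \ (⋃ i, closure (S i '' U)) ∧
    (∀ i, S i '' U ⊆ U) ∧ ∀ i j, i ≠ j → Disjoint (S i '' U) (S j '' U)

open scoped ENNReal NNReal

theorem lipschitzWith_of_dist_eq_mul {X : Type*} [PseudoMetricSpace X] {S : X → X} {c : ℝ}
    (hc : 0 ≤ c) (hS : ∀ x y, dist (S x) (S y) = c * dist x y) : LipschitzWith c.toNNReal S :=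
  LipschitzWith.of_dist_le_mul fun x y => by rw [hS, Real.coe_toNNReal _ hc]

theorem hausdorffMeasure_image_of_dist_eq_mul {X : Type*} [MetricSpace X] [MeasurableSpace X]
    [BorelSpace X] {S : X → X} {c : ℝ} (hc : 0 < c) (hS : ∀ x y, dist (S x) (S y) = c * dist x y)
    {d : ℝ} (hd : 0 ≤ d) (A : Set X) : μH[d] (S '' A) = ENNReal.ofReal c ^ d * μH[d] A := by
  have hanti : AntilipschitzWith c⁻¹.toNNReal S := AntilipschitzWith.of_le_mul_dist fun x y => by
    rw [hS, Real.coe_toNNReal _ (inv_nonneg.2 hc.le), inv_mul_cancel_left₀ hc.ne']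
  refine le_antisymm ((lipschitzWith_of_dist_eq_mul hc.le hS).hausdorffMeasure_image_le hd A) ?_
  have hcancel : ENNReal.ofReal c ^ d * ENNReal.ofReal c⁻¹ ^ d = 1 := by
    rw [← ENNReal.mul_rpow_of_nonneg _ _ hd, ← ENNReal.ofReal_mul hc.le, mul_inv_cancel₀ hc.ne',
      ENNReal.ofReal_one, ENNReal.one_rpow]
  calc ENNReal.ofReal c ^ d * μH[d] A
      ≤ ENNReal.ofReal c ^ d * (ENNReal.ofReal c⁻¹ ^ d * μH[d] (S '' A)) := by
        gcongr; exact hanti.le_hausdorffMeasure_image hd A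
    _ = μH[d] (S '' A) := by rw [← mul_assoc, hcancel, one_mul]

section SumRpow

variable {ι : Type*} [Fintype ι] {r : ι → ℝ}

theorem sum_ofReal_rpow (hr : ∀ i, 0 < r i) (d : ℝ) :
    ∑ i, ENNReal.ofReal (r i) ^ d = ENNReal.ofReal (∑ i, r i ^ d) := by
  rw [ENNReal.ofReal_sum_of_nonneg fun i _ => Real.rpow_nonneg (hr i).le d]
  exact Finset.sum_congr rfl fun i _ => ENNReal.ofReal_rpow_of_pos (hr i)

variable {s d : ℝ}

theorem one_le_sum_rpow_of_le (hr : ∀ i, 0 < r i ∧ r i < 1) (hs : ∑ i, r i ^ s = 1)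
    (hds : d ≤ s) : 1 ≤ ∑ i, r i ^ d :=
  hs ▸ Finset.sum_le_sum fun i _ => Real.rpow_le_rpow_of_exponent_ge (hr i).1 (hr i).2.le hds

theorem sum_rpow_lt_one_of_lt (hr : ∀ i, 0 < r i ∧ r i < 1) (hs : ∑ i, r i ^ s = 1)
    (hsd : s < d) : ∑ i, r i ^ d < 1 :=
  hs ▸ Finset.sum_lt_sum_of_nonempty (Finset.nonempty_of_sum_ne_zero (hs ▸ one_ne_zero))
    fun i _ => Real.rpow_lt_rpow_of_exponent_gt (hr i).1 (hr i).2 hsd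

end SumRpow

section

variable {X : Type*} {N : ℕ} (S : Fin N → X → X)

/-- `⋃_{|w| < k} S_w(C)`. -/
def partialOrbit (C : Set X) : ℕ → Set X
  | 0 => ∅
  | k + 1 => C ∪ ⋃ i, S i '' partialOrbit C k

/-- `⋃_{|w| = k} S_w(F)`. -/
def hutchinsonIter (F : Set X) : ℕ → Set X
  | 0 => F
  | k + 1 => ⋃ i, S i '' hutchinsonIter F k

namespace partialOrbit

variable {S} {C : Set X}

theorem subset {U : Set X} (hC : C ⊆ U) (hU : ∀ i, S i '' U ⊆ U) :
    ∀ k, partialOrbit S C k ⊆ U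
  | 0 => empty_subset U
  | k + 1 => union_subset hC <| iUnion_subset fun i => (image_mono (subset hC hU k)).trans (hU i)

theorem iUnion_subset_of_eq {F : Set X} (hF : F = (⋃ i, S i '' F) ∪ C) :
    ⋃ k, partialOrbit S C k ⊆ F :=
  have hF' := union_subset_iff.1 hF.symm.subset
  iUnion_subset <| subset hF'.2 (iUnion_subset_iff.1 hF'.1)

variable (S C) in
theorem monotone : Monotone (partialOrbit S C) :=
  monotone_nat_of_le_succ fun k => by
    induction k with
    | zero => exact empty_subset _
    | succ k ih => exact union_subset_union_right C <| iUnion_mono fun i => image_mono ih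

theorem isCompact [TopologicalSpace X] (hC : IsCompact C) (hS : ∀ i, Continuous (S i)) :
    ∀ k, IsCompact (partialOrbit S C k)
  | 0 => isCompact_empty
  | k + 1 => hC.union <| isCompact_iUnion fun i => (isCompact hC hS k).image (hS i)

variable [MetricSpace X] [MeasurableSpace X] [OpensMeasurableSpace X] {μ : Measure X}
  {a : Fin N → ℝ≥0∞}

theorem measure_eq (hμ : ∀ i A, μ (S i '' A) = a i * μ A) (hcosc : COSC S C)
    (hC : IsCompact C) (hS : ∀ i, Continuous (S i)) :
    ∀ k, μ (partialOrbit S C k) = μ C * ∑ j ∈ Finset.range k, (∑ i, a i) ^ j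
  | 0 => by simp [partialOrbit]
  | k + 1 => by
    have ih := measure_eq hμ hcosc hC hS k
    obtain ⟨U, -, hCU, hSU, hdisj⟩ := hcosc
    have hLU := subset (fun x hx => (hCU hx).1) hSU k
    have hmeas : ∀ i, MeasurableSet (S i '' partialOrbit S C k) :=
      fun i => ((isCompact hC hS k).image (hS i)).measurableSet
    have hCdisj : Disjoint C (⋃ i, S i '' partialOrbit S C k) :=
      disjoint_iUnion_right.2 fun i => Set.disjoint_left.2 fun x hxC hxS =>
        (hCU hxC).2 <| mem_iUnion.2 ⟨i, subset_closure (image_mono hLU hxS)⟩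
    have hpair : Pairwise (Function.onFun Disjoint fun i => S i '' partialOrbit S C k) :=
      fun i j hij => (hdisj i j hij).mono (image_mono hLU) (image_mono hLU)
    rw [partialOrbit, measure_union hCdisj (.iUnion hmeas), measure_iUnion hpair hmeas,
      tsum_fintype]
    simp_rw [hμ, ih, ← mul_assoc, ← Finset.sum_mul, Finset.sum_range_succ', pow_zero, pow_succ,
      ← Finset.sum_mul, mul_comm (∑ i, a i)]
    ring

theorem measure_iUnion_eq (hμ : ∀ i A, μ (S i '' A) = a i * μ A) (hcosc : COSC S C)
    (hC : IsCompact C) (hS : ∀ i, Continuous (S i)) :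
    μ (⋃ k, partialOrbit S C k) = μ C * (1 - ∑ i, a i)⁻¹ := by
  rw [(monotone S C).measure_iUnion, ← ENNReal.tsum_geometric, ENNReal.tsum_eq_iSup_nat,
    ENNReal.mul_iSup]
  simp_rw [measure_eq hμ hcosc hC hS]

end partialOrbit

theorem hausdorffMeasure_iUnion_partialOrbit [MetricSpace X] [MeasurableSpace X] [BorelSpace X]
    {C : Set X} {r : Fin N → ℝ} (hr : ∀ i, 0 < r i)
    (hS : ∀ i x y, dist (S i x) (S i y) = r i * dist x y) (hcosc : COSC S C) (hC : IsCompact C)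
    {d : ℝ} (hd : 0 ≤ d) :
    μH[d] (⋃ k, partialOrbit S C k) = μH[d] C * (1 - ENNReal.ofReal (∑ i, r i ^ d))⁻¹ := by
  rw [← sum_ofReal_rpow hr]
  exact partialOrbit.measure_iUnion_eq
    (fun i => hausdorffMeasure_image_of_dist_eq_mul (hr i) (hS i) hd) hcosc hC
    fun i => (lipschitzWith_of_dist_eq_mul (hr i).le (hS i)).continuous

theorem lipschitzWith_compList_ofFn [PseudoEMetricSpace X] {r : Fin N → ℝ≥0}
    (hS : ∀ i, LipschitzWith (r i) (S i)) :
    ∀ {k} (w : Fin k → Fin N), LipschitzWith (∏ j, r (w j)) (compList S (List.ofFn w))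
  | 0, _ => by simpa [compList] using LipschitzWith.id
  | k + 1, w => by
    rw [List.ofFn_succ, Fin.prod_univ_succ]
    exact (hS (w 0)).comp (lipschitzWith_compList_ofFn hS (Fin.tail w))

theorem sum_ediam_compList_image_rpow_le [PseudoEMetricSpace X] {r : Fin N → ℝ≥0}
    (hS : ∀ i, LipschitzWith (r i) (S i)) {d : ℝ} (hd : 0 ≤ d) (F : Set X) (k : ℕ) :
    ∑ w : Fin k → Fin N, ediam (compList S (List.ofFn w) '' F) ^ d ≤
      (∑ i, (r i : ℝ≥0∞) ^ d) ^ k * ediam F ^ d := by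
  rw [Finset.sum_pow', Fintype.piFinset_univ, Finset.sum_mul]
  gcongr with w
  calc ediam (compList S (List.ofFn w) '' F) ^ d
      ≤ ((∏ j, r (w j) : ℝ≥0) * ediam F) ^ d := by
        gcongr; exact (lipschitzWith_compList_ofFn S hS w).ediam_image_le F
    _ = (∏ j, (r (w j) : ℝ≥0∞) ^ d) * ediam F ^ d := by
        rw [ENNReal.mul_rpow_of_nonneg _ _ hd, ENNReal.ofNNReal_finsetProd,
          ENNReal.prod_rpow_of_nonneg hd]

namespace hutchinsonIter

variable {S} {F C : Set X}

theorem subset_union_partialOrbit (hF : F = (⋃ i, S i '' F) ∪ C) :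
    ∀ k, F ⊆ hutchinsonIter S F k ∪ partialOrbit S C k
  | 0 => subset_union_left
  | k + 1 => by
    rw [hutchinsonIter, partialOrbit, ← union_assoc, union_right_comm, ← iUnion_union_distrib]
    conv_lhs => rw [hF]
    exact union_subset_union_left C <| iUnion_mono fun i => by
      rw [← image_union]; exact image_mono (subset_union_partialOrbit hF k)

theorem subset_iInter_union_iUnion_partialOrbit (hF : F = (⋃ i, S i '' F) ∪ C) :
    F ⊆ (⋂ k, hutchinsonIter S F k) ∪ ⋃ k, partialOrbit S C k := by
  intro x hx
  by_contra h
  simp only [mem_union, mem_iInter, mem_iUnion, not_or, not_forall, not_exists] at h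
  obtain ⟨⟨k, hk⟩, hL⟩ := h
  exact (subset_union_partialOrbit hF k hx).elim hk (hL k)

variable (S F) in
theorem subset_iUnion_compList :
    ∀ k, hutchinsonIter S F k ⊆ ⋃ w : Fin k → Fin N, compList S (List.ofFn w) '' F
  | 0 => fun x hx => mem_iUnion.2 ⟨Fin.elim0, x, hx, rfl⟩
  | k + 1 => fun x hx => by
    obtain ⟨i, y, hy, rfl⟩ := mem_iUnion.1 hx
    obtain ⟨w, z, hz, rfl⟩ := mem_iUnion.1 (subset_iUnion_compList k hy)
    exact mem_iUnion.2 ⟨Fin.cons i w, z, hz, by simp [List.ofFn_succ, compList]⟩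

theorem hausdorffMeasure_iInter_eq_zero [MetricSpace X] [MeasurableSpace X] [BorelSpace X]
    {r : Fin N → ℝ≥0} (hS : ∀ i, LipschitzWith (r i) (S i)) (hr : ∀ i, r i < 1) {d : ℝ}
    (hd : 0 ≤ d) (hρ : ∑ i, (r i : ℝ≥0∞) ^ d < 1) (hF : ediam F ≠ ⊤) :
    μH[d] (⋂ k, hutchinsonIter S F k) = 0 := by
  set m := Finset.univ.sup r
  have hm : m < 1 := (Finset.sup_lt_iff one_pos).2 fun i _ => hr i
  have hmesh : ∀ k (w : Fin k → Fin N),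
      ediam (compList S (List.ofFn w) '' F) ≤ (m : ℝ≥0∞) ^ k * ediam F := fun k w => by
    refine ((lipschitzWith_compList_ofFn S hS w).ediam_image_le F).trans ?_
    have hprod : ∏ j, r (w j) ≤ m ^ k := by
      simpa using Finset.prod_le_pow_card Finset.univ _ m fun j _ =>
        Finset.le_sup (Finset.mem_univ (w j))
    gcongr
    exact_mod_cast hprod
  have hmesh_lim : Tendsto (fun k => (m : ℝ≥0∞) ^ k * ediam F) atTop (𝓝 0) := by
    simpa using ENNReal.Tendsto.mul_const
      (ENNReal.tendsto_pow_atTop_nhds_zero_of_lt_one (by exact_mod_cast hm)) (Or.inr hF)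
  have hsum_lim :
      Tendsto (fun k => (∑ i, (r i : ℝ≥0∞) ^ d) ^ k * ediam F ^ d) atTop (𝓝 0) := by
    simpa using ENNReal.Tendsto.mul_const (ENNReal.tendsto_pow_atTop_nhds_zero_of_lt_one hρ)
      (Or.inr (ENNReal.rpow_ne_top_of_nonneg hd hF))
  refine le_antisymm ?_ zero_le
  calc μH[d] (⋂ k, hutchinsonIter S F k)
      ≤ liminf (fun k => ∑ w : Fin k → Fin N, ediam (compList S (List.ofFn w) '' F) ^ d) atTop :=
        Measure.hausdorffMeasure_le_liminf_sum d _ _ hmesh_lim _ (.of_forall hmesh)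
          (.of_forall fun k => (iInter_subset _ k).trans (subset_iUnion_compList S F k))
    _ ≤ liminf (fun k => (∑ i, (r i : ℝ≥0∞) ^ d) ^ k * ediam F ^ d) atTop :=
        liminf_le_liminf (.of_forall (sum_ediam_compList_image_rpow_le S hS hd F))
    _ = 0 := hsum_lim.liminf_eq

end hutchinsonIter

theorem hausdorffMeasure_eq_iUnion_partialOrbit [MetricSpace X] [MeasurableSpace X]
    [BorelSpace X] {F C : Set X} (hF : F = (⋃ i, S i '' F) ∪ C) {r : Fin N → ℝ≥0}
    (hS : ∀ i, LipschitzWith (r i) (S i)) (hr : ∀ i, r i < 1) {d : ℝ} (hd : 0 ≤ d)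
    (hρ : ∑ i, (r i : ℝ≥0∞) ^ d < 1) (hFb : ediam F ≠ ⊤) :
    μH[d] F = μH[d] (⋃ k, partialOrbit S C k) := by
  refine le_antisymm ?_ (measure_mono (partialOrbit.iUnion_subset_of_eq hF))
  calc μH[d] F ≤ μH[d] ((⋂ k, hutchinsonIter S F k) ∪ ⋃ k, partialOrbit S C k) :=
        measure_mono (hutchinsonIter.subset_iInter_union_iUnion_partialOrbit hF)
    _ ≤ μH[d] (⋂ k, hutchinsonIter S F k) + μH[d] (⋃ k, partialOrbit S C k) :=
        measure_union_le _ _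
    _ = μH[d] (⋃ k, partialOrbit S C k) := by
        rw [hutchinsonIter.hausdorffMeasure_iInter_eq_zero hS hr hd hρ hFb, zero_add]

end

theorem hausdorff_measure_inhomogeneous_self_similar_general
    {X : Type*} [MetricSpace X] [MeasurableSpace X] [BorelSpace X]
    {N : ℕ} (S : Fin N → X → X)
    (r : Fin N → ℝ) (hr : ∀ i, 0 < r i ∧ r i < 1)
    (hsim : ∀ i, ∀ x y : X, dist (S i x) (S i y) = r i * dist x y)
    (C : Set X) (hCc : IsCompact C)
    (FC : Set X) (hFCc : IsCompact FC)
    (hFC : FC = (⋃ i, S i '' FC) ∪ C)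
    (s : ℝ) (hsdim : ∑ i, r i ^ s = 1)
    (d : ℝ) (hd0 : 0 ≤ d)
    (hcosc : COSC S C)
    (hC0 : 0 < μH[d] C) :
    (d ≤ s → μH[d] FC = ⊤) ∧
    (s < d → μH[d] FC = μH[d] C / ENNReal.ofReal (1 - ∑ i, r i ^ d)) := by
  have hpos : ∀ i, 0 < r i := fun i => (hr i).1
  have horbit := hausdorffMeasure_iUnion_partialOrbit S hpos hsim hcosc hCc hd0
  refine ⟨fun hds => ?_, fun hsd => ?_⟩
  · rw [tsub_eq_zero_of_le (ENNReal.one_le_ofReal.2 (one_le_sum_rpow_of_le hr hsdim hds)),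
      ENNReal.inv_zero, ENNReal.mul_top hC0.ne'] at horbit
    exact top_le_iff.1 (horbit ▸ measure_mono (partialOrbit.iUnion_subset_of_eq hFC))
  · have hρ : ∑ i, ENNReal.ofReal (r i) ^ d < 1 := by
      rw [sum_ofReal_rpow hpos]
      exact ENNReal.ofReal_lt_one.2 (sum_rpow_lt_one_of_lt hr hsdim hsd)
    rw [hausdorffMeasure_eq_iUnion_partialOrbit S hFC
        (fun i => lipschitzWith_of_dist_eq_mul (hpos i).le (hsim i))
        (fun i => Real.toNNReal_lt_one.2 (hr i).2) hd0 hρ hFCc.isBounded.ediam_ne_top,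
      horbit, ENNReal.ofReal_sub _ (Finset.sum_nonneg fun i _ => Real.rpow_nonneg (hpos i).le d),
      ENNReal.ofReal_one, div_eq_mul_inv]

/-- **Corollary 2.5.** For an inhomogeneous self-similar set with similarity dimension `s`,
COSC and `0 < ℋ^d(C) < ∞` where `d = dim_H F_C`: if `d ≤ s` then `ℋ^d(F_C) = ∞`, and
otherwise `ℋ^d(F_C) = ℋ^d(C) / (1 - ∑ᵢ Lip(Sᵢ)^d)`. -/
theorem hausdorff_measure_inhomogeneous_self_similar
    {X : Type*} [MetricSpace X] [CompactSpace X] [MeasurableSpace X] [BorelSpace X]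
    {N : ℕ} (S : Fin N → X → X)
    (r : Fin N → ℝ) (hr : ∀ i, 0 < r i ∧ r i < 1)
    (hsim : ∀ i, ∀ x y : X, dist (S i x) (S i y) = r i * dist x y)
    (C : Set X) (hCc : IsCompact C)
    (FC : Set X) (hFCc : IsCompact FC) (hFCne : FC.Nonempty)
    (hFC : FC = (⋃ i, S i '' FC) ∪ C)
    (s : ℝ) (hsdim : ∑ i, r i ^ s = 1)
    (d : ℝ) (hd0 : 0 ≤ d) (hd : dimH FC = ENNReal.ofReal d)
    (hcosc : COSC S C)
    (hC0 : 0 < μH[d] C) (hC1 : μH[d] C < ⊤) :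
    (d ≤ s → μH[d] FC = ⊤) ∧
    (s < d → μH[d] FC = μH[d] C / ENNReal.ofReal (1 - ∑ i, r i ^ d)) :=
  hausdorff_measure_inhomogeneous_self_similar_general S r hr hsim C hCc FC hFCc hFC s hsdim d hd0
    hcosc hC0
end

section
/- Let (X,d) be a compact metric space, 𝕀 = {S_1,...,S_N} an IFS of contractions on X with compact condensation set C. Then dim_H F_C = max{dim_H F_∅, dim_H C}. -/
open Metric Filter Set MeasureTheory Topology

/-- `S` is a contraction: Lipschitz with some constant `c < 1`. -/
def IsContractionMap {X : Type*} [MetricSpace X] (S : X → X) : Prop :=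
  ∃ c : ℝ, 0 ≤ c ∧ c < 1 ∧ ∀ x y : X, dist (S x) (S y) ≤ c * dist x y

/-!
Write `T A = ⋃ i, S i '' A` for the Hutchinson operator. Every `S i` is `K`-Lipschitz for a common
`K < 1`, so a point of `T^[k] A` lies within `K ^ k * R` of any nonempty closed `T`-invariant set
`E`, where `A ⊆ closedBall e R` with `e ∈ E`. Since `F_∅ = T^[k] F_∅` for all `k`, this gives
`F_∅ ⊆ F_C`. Unfolding `F_C = T F_C ∪ C` gives `F_C ⊆ T^[k] F_C ∪ ⋃ n, T^[n] C`, so a point of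
`F_C` outside the countable union `⋃ n, T^[n] C` lies in every `T^[k] F_C`, hence in `F_∅`.
Lipschitz maps do not raise Hausdorff dimension, so `dim_H (T^[n] C) ≤ dim_H C`.
-/

open scoped NNReal

section Hutchinson

variable {ι X : Type*}

def hutchinson (S : ι → X → X) (A : Set X) : Set X :=
  ⋃ i, S i '' A

variable {S : ι → X → X}

theorem hutchinson_subset_iff {E : Set X} : hutchinson S E ⊆ E ↔ ∀ i, MapsTo (S i) E E := by
  simp only [hutchinson, iUnion_subset_iff, image_subset_iff, mapsTo_iff_subset_preimage]

theorem hutchinson_mono : Monotone (hutchinson S) :=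
  fun _ _ h => iUnion_mono fun _ => image_mono h

theorem hutchinson_union (A B : Set X) :
    hutchinson S (A ∪ B) = hutchinson S A ∪ hutchinson S B := by
  simp only [hutchinson, image_union, iUnion_union_distrib]

theorem iterate_hutchinson_union (A B : Set X) (k : ℕ) :
    (hutchinson S)^[k] (A ∪ B) = (hutchinson S)^[k] A ∪ (hutchinson S)^[k] B := by
  induction k with
  | zero => rfl
  | succ k ih => simp only [Function.iterate_succ_apply', ih, hutchinson_union]

theorem subset_iterate_hutchinson_union_iUnion {A C : Set X} (hA : A ⊆ hutchinson S A ∪ C)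
    (k : ℕ) : A ⊆ (hutchinson S)^[k] A ∪ ⋃ n, (hutchinson S)^[n] C := by
  induction k with
  | zero => exact subset_union_left
  | succ k ih =>
    have hstep : (hutchinson S)^[k] A ⊆ (hutchinson S)^[k + 1] A ∪ (hutchinson S)^[k] C := by
      rw [Function.iterate_succ_apply, ← iterate_hutchinson_union]
      exact hutchinson_mono.iterate k hA
    refine ih.trans (union_subset (hstep.trans (union_subset_union_right _ ?_)) subset_union_right)
    exact subset_iUnion_of_subset k subset_rfl

end Hutchinson

section Contraction

variable {ι X : Type*} [MetricSpace X] {S : ι → X → X} {K : ℝ≥0}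

theorem exists_lipschitzWith_lt_one_of_isContractionMap [Fintype ι]
    (hS : ∀ i, IsContractionMap (S i)) : ∃ K : ℝ≥0, K < 1 ∧ ∀ i, LipschitzWith K (S i) := by
  choose c hc0 hc1 hcS using hS
  refine ⟨Finset.univ.sup fun i => ⟨c i, hc0 i⟩, (Finset.sup_lt_iff zero_lt_one).2 fun i _ => hc1 i,
    fun i => LipschitzWith.of_dist_le_mul fun x y => (hcS i x y).trans ?_⟩
  gcongr
  exact NNReal.coe_le_coe.2 (Finset.le_sup (f := fun i => (⟨c i, hc0 i⟩ : ℝ≥0)) (Finset.mem_univ i))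

theorem LipschitzWith.infDist_le_mul_of_mapsTo {f : X → X} (hf : LipschitzWith K f) {E : Set X}
    (hE : MapsTo f E E) (x : X) : infDist (f x) E ≤ K * infDist x E := by
  rcases E.eq_empty_or_nonempty with rfl | hne
  · simp
  have hle : ∀ y ∈ E, infDist (f x) E ≤ K * dist x y := fun y hy =>
    (infDist_le_dist_of_mem (hE hy)).trans (hf.dist_le_mul x y)
  rcases eq_or_ne K 0 with rfl | hK
  · obtain ⟨y, hy⟩ := hne
    simpa using hle y hy
  have hK' : (0 : ℝ) < K := by positivity
  rw [← div_le_iff₀' hK', le_infDist hne]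
  exact fun y hy => (div_le_iff₀' hK').2 (hle y hy)

theorem infDist_le_of_mem_iterate_hutchinson (hS : ∀ i, LipschitzWith K (S i)) {E A : Set X}
    (hE : hutchinson S E ⊆ E) {R : ℝ} (hA : ∀ z ∈ A, infDist z E ≤ R) (k : ℕ) :
    ∀ y ∈ (hutchinson S)^[k] A, infDist y E ≤ K ^ k * R := by
  induction k with
  | zero => simpa using hA
  | succ k ih =>
    rw [Function.iterate_succ_apply']
    rintro _ ⟨_, ⟨i, rfl⟩, z, hz, rfl⟩
    calc infDist (S i z) E ≤ K * infDist z E :=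
          (hS i).infDist_le_mul_of_mapsTo (hutchinson_subset_iff.1 hE i) z
      _ ≤ K * (K ^ k * R) := by gcongr; exact ih z hz
      _ = K ^ (k + 1) * R := by rw [pow_succ']; ring

theorem mem_of_forall_mem_iterate_hutchinson (hS : ∀ i, LipschitzWith K (S i)) (hK : K < 1)
    {E A : Set X} (hEc : IsClosed E) (hEne : E.Nonempty) (hE : hutchinson S E ⊆ E)
    (hA : Bornology.IsBounded A) {x : X} (hx : ∀ k, x ∈ (hutchinson S)^[k] A) : x ∈ E := by
  obtain ⟨e, he⟩ := hEne
  obtain ⟨R, hR⟩ := hA.subset_closedBall e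
  have hbound : ∀ k, infDist x E ≤ K ^ k * R := fun k =>
    infDist_le_of_mem_iterate_hutchinson hS hE
      (fun z hz => (infDist_le_dist_of_mem he).trans (hR hz)) k x (hx k)
  have hlim : Tendsto (fun k : ℕ => (K : ℝ) ^ k * R) atTop (𝓝 0) := by
    simpa using (tendsto_pow_atTop_nhds_zero_of_lt_one K.2 (by exact_mod_cast hK)).mul_const R
  rw [hEc.mem_iff_infDist_zero ⟨e, he⟩]
  exact le_antisymm (ge_of_tendsto' hlim hbound) infDist_nonneg

theorem dimH_hutchinson_le [Countable ι] {K : ι → ℝ≥0} (hS : ∀ i, LipschitzWith (K i) (S i))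
    (A : Set X) : dimH (hutchinson S A) ≤ dimH A := by
  rw [hutchinson, dimH_iUnion]
  exact iSup_le fun i => (hS i).dimH_image_le A

theorem dimH_iterate_hutchinson_le [Countable ι] {K : ι → ℝ≥0}
    (hS : ∀ i, LipschitzWith (K i) (S i)) (A : Set X) (n : ℕ) :
    dimH ((hutchinson S)^[n] A) ≤ dimH A := by
  induction n with
  | zero => rfl
  | succ n ih =>
    rw [Function.iterate_succ_apply']
    exact (dimH_hutchinson_le hS _).trans ih

end Contraction

theorem dimH_inhomogeneous_attractor_general
    {X : Type*} [MetricSpace X]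
    {N : ℕ} (S : Fin N → X → X) (hS : ∀ i, IsContractionMap (S i))
    (C : Set X)
    (F0 : Set X) (hF0c : IsCompact F0) (hF0ne : F0.Nonempty)
    (hF0 : F0 = ⋃ i, S i '' F0)
    (FC : Set X) (hFCc : IsCompact FC) (hFCne : FC.Nonempty)
    (hFC : FC = (⋃ i, S i '' FC) ∪ C) :
    dimH FC = max (dimH F0) (dimH C) := by
  obtain ⟨K, hK, hKS⟩ := exists_lipschitzWith_lt_one_of_isContractionMap hS
  have hF0_sub : F0 ⊆ FC := fun x hx =>
    mem_of_forall_mem_iterate_hutchinson hKS hK hFCc.isClosed hFCne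
      (subset_union_left.trans_eq hFC.symm) hF0c.isBounded
      fun k => by rwa [Function.iterate_fixed hF0.symm]
  have hFC_sub : FC ⊆ F0 ∪ ⋃ n, (hutchinson S)^[n] C := by
    intro x hx
    by_cases hxC : x ∈ ⋃ n, (hutchinson S)^[n] C
    · exact Or.inr hxC
    refine Or.inl (mem_of_forall_mem_iterate_hutchinson hKS hK hF0c.isClosed hF0ne
      hF0.symm.subset hFCc.isBounded fun k => ?_)
    exact (subset_iterate_hutchinson_union_iUnion hFC.subset k hx).resolve_right hxC
  refine le_antisymm ?_
    (max_le (dimH_mono hF0_sub) (dimH_mono (subset_union_right.trans_eq hFC.symm)))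
  calc dimH FC ≤ dimH (F0 ∪ ⋃ n, (hutchinson S)^[n] C) := dimH_mono hFC_sub
    _ ≤ max (dimH F0) (dimH C) := by
      rw [dimH_union, dimH_iUnion]
      exact max_le_max le_rfl (iSup_le fun n => dimH_iterate_hutchinson_le hKS C n)

/-- The Hausdorff dimension of an inhomogeneous attractor is
`dim_H F_C = max{dim_H F_∅, dim_H C}`. -/
theorem dimH_inhomogeneous_attractor
    {X : Type*} [MetricSpace X] [CompactSpace X]
    {N : ℕ} (S : Fin N → X → X) (hS : ∀ i, IsContractionMap (S i))
    (C : Set X) (hCc : IsCompact C)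
    (F0 : Set X) (hF0c : IsCompact F0) (hF0ne : F0.Nonempty)
    (hF0 : F0 = ⋃ i, S i '' F0)
    (FC : Set X) (hFCc : IsCompact FC) (hFCne : FC.Nonempty)
    (hFC : FC = (⋃ i, S i '' FC) ∪ C) :
    dimH FC = max (dimH F0) (dimH C) :=
  dimH_inhomogeneous_attractor_general S hS C F0 hF0c hF0ne hF0 FC hFCc hFCne hFC
end

section
/- Let (X,d) be a compact metric space, 𝕀 = {S_1,...,S_N} an IFS of bi-Lipschitz contractions on X with compact condensation set C, upper Lipschitz dimension s, and let t > max{s, dim̄_B C}. Then there exists K ∈ ℕ such that for all k > K one has t > s_k, and for each k the IFS 𝕀_k = {S_𝐢 : 𝐢 ∈ I^k} with condensation set C satisfies dim̄_B F_C = dim̄_B F_C^k. -/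
open Metric Filter Set MeasureTheory Topology

/-- `N_δ(F)`: the smallest number of sets of diameter at most `δ` needed to cover `F`. -/
noncomputable def coverNum {X : Type*} [MetricSpace X] (F : Set X) (δ : ℝ) : ℕ :=
  sInf {n : ℕ | ∃ 𝒰 : Finset (Set X), 𝒰.card = n ∧ (∀ U ∈ 𝒰, Metric.diam U ≤ δ) ∧ F ⊆ ⋃₀ ↑𝒰}

/-- Upper box dimension `dim̄_B F = limsup_{δ → 0⁺} log N_δ(F) / (-log δ)`. -/
noncomputable def ubDim {X : Type*} [MetricSpace X] (F : Set X) : ℝ :=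
  Filter.limsup (fun δ : ℝ => Real.log (coverNum F δ) / (-Real.log δ)) (nhdsWithin 0 (Set.Ioi 0))

/-!
`F_C^k ⊆ F_C`, and `F_C ⊆ ⋃_{|w| < k} S_w(F_C^k)`: both inclusions come from the contraction
principle that an inhomogeneous attractor lies in every closed nonempty set that contains `C` and
is mapped into itself by the maps of the system (for the second, `⋃_{|w| < k} S_w(F_C^k)` is
such a set for `𝕀`). The maps `S_w` are 1-Lipschitz, so
`N_δ(F_C^k) ≤ N_δ(F_C) ≤ M N_δ(F_C^k)` with `M` the number of words of length `< k`, and the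
error `log M / (-log δ)` disappears in the limsup. The first claim only uses `s_k → s < t`.
-/

open scoped NNReal ENNReal

lemma Real.sInf_eq_of_subset_of_add_mem {A B : Set ℝ} (hAB : A ⊆ B) (hB : BddBelow B)
    (hadd : ∀ b ∈ B, ∀ ε > 0, b + ε ∈ A) : sInf A = sInf B := by
  rcases B.eq_empty_or_nonempty with rfl | ⟨b, hb⟩
  · rw [subset_empty_iff.mp hAB]
  have hA : A.Nonempty := ⟨b + 1, hadd b hb 1 one_pos⟩
  refine le_antisymm (le_of_forall_pos_le_add fun ε hε => ?_) (csInf_le_csInf hB hA hAB)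
  have : sInf A - ε ≤ sInf B := le_csInf ⟨b, hb⟩ fun b' hb' => by
    linarith [csInf_le (hB.mono hAB) (hadd b' hb' ε hε)]
  linarith

/-- No boundedness from above is needed: if `g` is unbounded, so is `f`, and both limsups take
the junk value `sInf ∅ = 0`. -/
lemma Filter.limsup_eq_of_le_add_tendsto_zero {α : Type*} {f g h : α → ℝ} {l : Filter α}
    [l.NeBot] (hg : IsBoundedUnder (· ≥ ·) l g) (hgf : g ≤ᶠ[l] f) (hfg : f ≤ᶠ[l] g + h)
    (hh : Tendsto h l (𝓝 0)) : limsup f l = limsup g l := by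
  obtain ⟨c, hc⟩ := hg.isCoboundedUnder_flip
  refine Real.sInf_eq_of_subset_of_add_mem
    (fun a ha => (ha.and hgf).mono fun x hx => hx.2.trans hx.1) ⟨c, hc⟩ fun a ha ε hε => ?_
  filter_upwards [ha, hfg, hh.eventually_le_const hε] with x hga hfx hhx
  exact hfx.trans (add_le_add hga hhx)

section Covering

variable {X : Type*} [MetricSpace X]

lemma coverNum_le_card {F : Set X} {δ : ℝ} (𝒰 : Finset (Set X))
    (hdiam : ∀ U ∈ 𝒰, diam U ≤ δ) (hF : F ⊆ ⋃₀ ↑𝒰) : coverNum F δ ≤ 𝒰.card :=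
  Nat.sInf_le ⟨𝒰, rfl, hdiam, hF⟩

variable [CompactSpace X]

lemma exists_finset_card_eq_coverNum (F : Set X) {δ : ℝ} (hδ : 0 < δ) :
    ∃ 𝒰 : Finset (Set X), 𝒰.card = coverNum F δ ∧ (∀ U ∈ 𝒰, diam U ≤ δ) ∧ F ⊆ ⋃₀ ↑𝒰 := by
  classical
  suffices hne : {n : ℕ | ∃ 𝒰 : Finset (Set X), 𝒰.card = n ∧ (∀ U ∈ 𝒰, diam U ≤ δ) ∧
      F ⊆ ⋃₀ ↑𝒰}.Nonempty from Nat.sInf_mem hne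
  obtain ⟨t, -, ht, hcov⟩ :=
    (isCompact_univ (X := X)).finite_cover_balls (e := δ / 2) (by positivity)
  refine ⟨_, ht.toFinset.image (ball · (δ / 2)), rfl, ?_, fun x _ => ?_⟩
  · simp only [Finset.mem_image, Set.Finite.mem_toFinset, forall_exists_index, and_imp]
    rintro _ x - rfl
    linarith [diam_ball (x := x) (show 0 ≤ δ / 2 by positivity)]
  · obtain ⟨y, hy, hxy⟩ := mem_iUnion₂.mp (hcov (mem_univ x))
    exact ⟨ball y (δ / 2), by simpa using ⟨y, hy, rfl⟩, hxy⟩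

lemma coverNum_pos {F : Set X} (hF : F.Nonempty) {δ : ℝ} (hδ : 0 < δ) : 0 < coverNum F δ := by
  obtain ⟨𝒰, hcard, -, hcov⟩ := exists_finset_card_eq_coverNum F hδ
  obtain ⟨x, hx⟩ := hF
  obtain ⟨U, hU, -⟩ := hcov hx
  exact hcard ▸ Finset.card_pos.mpr ⟨U, hU⟩

lemma coverNum_mono {F G : Set X} (h : F ⊆ G) {δ : ℝ} (hδ : 0 < δ) :
    coverNum F δ ≤ coverNum G δ := by
  obtain ⟨𝒰, hcard, hdiam, hcov⟩ := exists_finset_card_eq_coverNum G hδ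
  exact hcard ▸ coverNum_le_card 𝒰 hdiam (h.trans hcov)

lemma coverNum_iUnion_image_le {ι : Type*} [Finite ι] (φ : ι → X → X)
    (hφ : ∀ m, LipschitzWith 1 (φ m)) (G : Set X) {δ : ℝ} (hδ : 0 < δ) :
    coverNum (⋃ m, φ m '' G) δ ≤ Nat.card ι * coverNum G δ := by
  classical
  have := Fintype.ofFinite ι
  obtain ⟨𝒰, hcard, hdiam, hcov⟩ := exists_finset_card_eq_coverNum G hδ
  calc coverNum (⋃ m, φ m '' G) δ
      ≤ (Finset.univ.biUnion fun m => 𝒰.image (φ m '' ·)).card := by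
        refine coverNum_le_card _ ?_ ?_
        · simp only [Finset.mem_biUnion, Finset.mem_image, Finset.mem_univ, true_and,
            forall_exists_index, and_imp]
          rintro _ m U hU rfl
          calc diam (φ m '' U) ≤ (1 : ℝ≥0) * diam U :=
                (hφ m).diam_image_le U (isCompact_univ.isBounded.subset (subset_univ U))
            _ ≤ δ := by simpa using hdiam U hU
        · rintro _ ⟨_, ⟨m, rfl⟩, y, hy, rfl⟩
          obtain ⟨U, hU, hyU⟩ := hcov hy
          exact ⟨φ m '' U, by simpa using ⟨m, U, hU, rfl⟩, mem_image_of_mem _ hyU⟩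
    _ ≤ ∑ m : ι, (𝒰.image (φ m '' ·)).card := Finset.card_biUnion_le
    _ ≤ ∑ _m : ι, 𝒰.card := Finset.sum_le_sum fun m _ => Finset.card_image_le
    _ = Nat.card ι * coverNum G δ := by simp [hcard, Nat.card_eq_fintype_card]

lemma ubDim_eq_of_coverNum_le_mul {F G : Set X} (hG : G.Nonempty) (M : ℕ)
    (hGF : ∀ δ > 0, coverNum G δ ≤ coverNum F δ)
    (hFG : ∀ δ > 0, coverNum F δ ≤ M * coverNum G δ) : ubDim F = ubDim G := by
  have hGpos : ∀ δ > 0, (0 : ℝ) < coverNum G δ := fun δ hδ => by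
    exact_mod_cast coverNum_pos hG hδ
  have hM : (0 : ℝ) < M := by
    have := (coverNum_pos hG one_pos).trans_le ((hGF 1 one_pos).trans (hFG 1 one_pos))
    exact_mod_cast Nat.pos_of_mul_pos_right this
  have hsmall : ∀ᶠ δ in 𝓝[>] (0 : ℝ), 0 < δ ∧ 0 < -Real.log δ :=
    eventually_mem_nhdsWithin.and <| (eventually_mem_nhdsWithin.and
      (eventually_nhdsWithin_of_eventually_nhds (eventually_lt_nhds one_pos))).mono
        fun δ hδ => neg_pos.mpr (Real.log_neg hδ.1 hδ.2)
  refine limsup_eq_of_le_add_tendsto_zero (h := fun δ => Real.log M / -Real.log δ)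
    ⟨0, eventually_map.mpr <| hsmall.mono fun δ hδ => div_nonneg
      (Real.log_nonneg (by exact_mod_cast coverNum_pos hG hδ.1)) hδ.2.le⟩ ?_ ?_ ?_
  · filter_upwards [hsmall] with δ hδ
    exact div_le_div_of_nonneg_right
      (Real.log_le_log (hGpos δ hδ.1) (by exact_mod_cast hGF δ hδ.1)) hδ.2.le
  · filter_upwards [hsmall] with δ hδ
    rw [Pi.add_apply, ← add_div, add_comm, ← Real.log_mul hM.ne' (hGpos δ hδ.1).ne']
    exact div_le_div_of_nonneg_right (Real.log_le_log
      ((hGpos δ hδ.1).trans_le (by exact_mod_cast hGF δ hδ.1))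
      (by exact_mod_cast hFG δ hδ.1)) hδ.2.le
  · exact tendsto_const_nhds.div_atTop
      (tendsto_neg_atBot_atTop.comp Real.tendsto_log_nhdsGT_zero)

lemma ubDim_eq_of_subset_of_subset_iUnion_image {ι : Type*} [Finite ι] (φ : ι → X → X)
    (hφ : ∀ m, LipschitzWith 1 (φ m)) {F G : Set X} (hG : G.Nonempty) (hGF : G ⊆ F)
    (hFG : F ⊆ ⋃ m, φ m '' G) : ubDim F = ubDim G :=
  ubDim_eq_of_coverNum_le_mul hG (Nat.card ι) (fun _ hδ => coverNum_mono hGF hδ)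
    fun _ hδ => (coverNum_mono hFG hδ).trans (coverNum_iUnion_image_le φ hφ G hδ)

end Covering

section Attractor

variable {X : Type*} {ι : Type*} {T : ι → X → X} {A C : Set X}

lemma mapsTo_compList {N : ℕ} {S : Fin N → X → X} (hS : ∀ i, MapsTo (S i) A A)
    (l : List (Fin N)) : MapsTo (compList S l) A A := by
  induction l with
  | nil => exact mapsTo_id A
  | cons i l ih => exact (hS i).comp ih

lemma mapsTo_of_eq_iUnion_image_union (hA : A = (⋃ m, T m '' A) ∪ C) (m : ι) :
    MapsTo (T m) A A := fun x hx => by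
  rw [hA]
  exact Or.inl (mem_iUnion.mpr ⟨m, mem_image_of_mem _ hx⟩)

lemma subset_of_eq_iUnion_image_union (hA : A = (⋃ m, T m '' A) ∪ C) : C ⊆ A := by
  rw [hA]
  exact subset_union_right

variable [MetricSpace X]

lemma IsBiLipContraction.lipschitzWith {S : X → X} (hS : IsBiLipContraction S) :
    LipschitzWith (LipPlus S).toNNReal S :=
  LipschitzWith.of_dist_le' hS.1

lemma exists_lipschitzWith_lt_one_of_isBiLipContraction [Fintype ι]
    (hT : ∀ m, IsBiLipContraction (T m)) : ∃ r : ℝ≥0, r < 1 ∧ ∀ m, LipschitzWith r (T m) :=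
  ⟨Finset.univ.sup fun m => (LipPlus (T m)).toNNReal,
    (Finset.sup_lt_iff zero_lt_one).mpr fun m _ => Real.toNNReal_lt_one.mpr (hT m).2.2.2.2,
    fun m => (hT m).lipschitzWith.weaken
      (Finset.le_sup (f := fun m => (LipPlus (T m)).toNNReal) (Finset.mem_univ m))⟩

lemma lipschitzWith_compList {N : ℕ} {S : Fin N → X → X} {r : ℝ≥0}
    (hS : ∀ i, LipschitzWith r (S i)) (l : List (Fin N)) :
    LipschitzWith (r ^ l.length) (compList S l) := by
  induction l with
  | nil => exact LipschitzWith.id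
  | cons i l ih =>
    rw [List.length_cons, pow_succ']
    exact (hS i).comp ih

lemma infEDist_image_le_mul {f : X → X} {r : ℝ≥0} (hf : LipschitzWith r f) {B : Set X}
    (hB : IsCompact B) (hBne : B.Nonempty) (hfB : MapsTo f B B) (x : X) :
    infEDist (f x) B ≤ r * infEDist x B := by
  obtain ⟨b, hb, hxb⟩ := hB.exists_infEDist_eq_edist hBne x
  rw [hxb]
  exact (infEDist_le_edist_of_mem (hfB hb)).trans (hf x b)

variable [CompactSpace X]

/-- The largest distance from a point of `A` to `B` is multiplied by at most `r < 1` under the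
maps, so it vanishes. -/
lemma subset_of_eq_iUnion_image_union_of_mapsTo {r : ℝ≥0} (hr : r < 1)
    (hT : ∀ m, LipschitzWith r (T m)) (hA : A = (⋃ m, T m '' A) ∪ C) {B : Set X}
    (hB : IsClosed B) (hBne : B.Nonempty) (hCB : C ⊆ B) (hTB : ∀ m, MapsTo (T m) B B) :
    A ⊆ B := by
  set e : ℝ≥0∞ := ⨆ x ∈ A, infEDist x B
  have he_le : ∀ x ∈ A, infEDist x B ≤ e := fun x hx =>
    le_iSup₂ (f := fun x _ => infEDist x B) x hx
  have he_top : e ≠ ⊤ := by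
    obtain ⟨b, hb⟩ := hBne
    refine ne_top_of_le_ne_top (isCompact_univ (X := X)).isBounded.ediam_ne_top
      (iSup₂_le fun x _ => ?_)
    exact (infEDist_le_edist_of_mem hb).trans (edist_le_ediam_of_mem trivial trivial)
  have he_contract : e ≤ r * e := by
    refine iSup₂_le fun x hx => ?_
    rw [hA] at hx
    rcases hx with ⟨_, ⟨m, rfl⟩, y, hy, rfl⟩ | hx
    · exact (infEDist_image_le_mul (hT m) hB.isCompact hBne (hTB m) y).trans
        (by gcongr; exact he_le y hy)
    · exact (infEDist_zero_of_mem (hCB hx)).trans_le bot_le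
  have he_zero : e = 0 := by
    by_contra h0
    have : (r : ℝ≥0∞) * e < 1 * e := ENNReal.mul_lt_mul_left h0 he_top (by exact_mod_cast hr)
    exact (one_mul e ▸ this).not_ge he_contract
  intro x hx
  exact (mem_iff_infEDist_zero_of_closed hB).mpr (nonpos_iff_eq_zero.mp (he_zero ▸ he_le x hx))

end Attractor

section IteratedSystem

variable {X : Type*} {N : ℕ} {S : Fin N → X → X} {C Fk : Set X} {k : ℕ}

lemma mapsTo_compList_of_length_eq
    (hFk : Fk = (⋃ w : Fin k → Fin N, compList S (List.ofFn w) '' Fk) ∪ C)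
    {l : List (Fin N)} (hl : l.length = k) : MapsTo (compList S l) Fk Fk := by
  subst hl
  simpa only [List.ofFn_get] using mapsTo_of_eq_iUnion_image_union hFk l.get

/-- A word of length `< k` followed by one more letter either is still shorter than `k`, or has
length exactly `k` and so maps `Fk` into itself. -/
lemma mapsTo_iUnion_image_compList_length_lt (hk : 0 < k)
    (hFk : Fk = (⋃ w : Fin k → Fin N, compList S (List.ofFn w) '' Fk) ∪ C) (i : Fin N) :
    MapsTo (S i) (⋃ l : {l : List (Fin N) // l.length < k}, compList S l '' Fk)
      (⋃ l : {l : List (Fin N) // l.length < k}, compList S l '' Fk) := by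
  rintro _ ⟨_, ⟨⟨l, hl⟩, rfl⟩, y, hy, rfl⟩
  rcases (Nat.succ_le_of_lt hl).lt_or_eq with hlt | heq
  · exact mem_iUnion.mpr ⟨⟨i :: l, hlt⟩, y, hy, rfl⟩
  · exact mem_iUnion.mpr
      ⟨⟨[], hk⟩, _, mapsTo_compList_of_length_eq (l := i :: l) hFk heq hy, rfl⟩

variable [MetricSpace X] [CompactSpace X]

lemma ubDim_eq_ubDim_of_iterate {r : ℝ≥0} (hr : r < 1) (hS : ∀ i, LipschitzWith r (S i))
    {F : Set X} (hFc : IsClosed F) (hFne : F.Nonempty) (hF : F = (⋃ i, S i '' F) ∪ C)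
    (hk : 0 < k) (hFkc : IsCompact Fk) (hFkne : Fk.Nonempty)
    (hFk : Fk = (⋃ w : Fin k → Fin N, compList S (List.ofFn w) '' Fk) ∪ C) :
    ubDim F = ubDim Fk := by
  have : Finite {l : List (Fin N) // l.length < k} := (List.finite_length_lt _ k).to_subtype
  have hcompList_lip (l : List (Fin N)) : LipschitzWith 1 (compList S l) :=
    (lipschitzWith_compList hS l).weaken (pow_le_one₀ r.2 hr.le)
  have hFk_sub : Fk ⊆ F :=
    subset_of_eq_iUnion_image_union_of_mapsTo hr
      (fun w => (lipschitzWith_compList hS _).weaken <| by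
        rw [List.length_ofFn]
        exact pow_le_of_le_one r.2 hr.le hk.ne')
      hFk hFc hFne (subset_of_eq_iUnion_image_union hF)
      fun w => mapsTo_compList (mapsTo_of_eq_iUnion_image_union hF) _
  set E := ⋃ l : {l : List (Fin N) // l.length < k}, compList S l '' Fk
  have hFk_sub_E : Fk ⊆ E := subset_iUnion_of_subset ⟨[], hk⟩ (image_id Fk).superset
  have hE_compact : IsCompact E := isCompact_iUnion fun l => hFkc.image (hcompList_lip l).continuous
  have hF_sub_E : F ⊆ E :=
    subset_of_eq_iUnion_image_union_of_mapsTo hr hS hF hE_compact.isClosed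
      (hFkne.mono hFk_sub_E) ((subset_of_eq_iUnion_image_union hFk).trans hFk_sub_E)
      (mapsTo_iUnion_image_compList_length_lt hk hFk)
  exact ubDim_eq_of_subset_of_subset_iUnion_image (fun l : {l : List (Fin N) // l.length < k} =>
    compList S l) (fun l => hcompList_lip l) hFkne hFk_sub hF_sub_E

end IteratedSystem

theorem upper_box_dim_iterated_system_eventually_general
    {X : Type*} [MetricSpace X] [CompactSpace X]
    {N : ℕ} (S : Fin N → X → X) (hS : ∀ i, IsBiLipContraction (S i))
    (C : Set X)
    (FC : Set X) (hFCc : IsCompact FC) (hFCne : FC.Nonempty)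
    (hFC : FC = (⋃ i, S i '' FC) ∪ C)
    (sk : ℕ → ℝ)
    (s : ℝ) (hs : Filter.Tendsto sk Filter.atTop (𝓝 s))
    (t : ℝ) (ht : max s (ubDim C) < t) :
    (∃ K : ℕ, ∀ k : ℕ, K < k → sk k < t) ∧
    (∀ k : ℕ, 1 ≤ k → ∀ FCk : Set X, IsCompact FCk → FCk.Nonempty →
      FCk = (⋃ w : Fin k → Fin N, compList S (List.ofFn w) '' FCk) ∪ C →
      ubDim FC = ubDim FCk) := by
  refine ⟨?_, fun k hk FCk hFCkc hFCkne hFCk => ?_⟩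
  · obtain ⟨K, hK⟩ :=
      eventually_atTop.mp (hs.eventually_lt_const ((le_max_left _ _).trans_lt ht))
    exact ⟨K, fun k hk => hK k hk.le⟩
  · obtain ⟨r, hr, hSr⟩ := exists_lipschitzWith_lt_one_of_isBiLipContraction hS
    exact ubDim_eq_ubDim_of_iterate hr hSr hFCc.isClosed hFCne hFC hk hFCkc hFCkne hFCk

/-- **Corollary 3.2.** If `t > max{s, dim̄_B C}`, then there is `K ∈ ℕ` with `t > s_k` for
all `k > K`, and for each `k` the system `𝕀_k = {S_𝐢 : 𝐢 ∈ I^k}` with condensation set `C`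
satisfies `dim̄_B F_C = dim̄_B F_C^k`. -/
theorem upper_box_dim_iterated_system_eventually
    {X : Type*} [MetricSpace X] [CompactSpace X]
    {N : ℕ} (S : Fin N → X → X) (hS : ∀ i, IsBiLipContraction (S i))
    (C : Set X) (hCc : IsCompact C) (hCne : C.Nonempty)
    (FC : Set X) (hFCc : IsCompact FC) (hFCne : FC.Nonempty)
    (hFC : FC = (⋃ i, S i '' FC) ∪ C)
    (sk : ℕ → ℝ)
    (hsk : ∀ k, 1 ≤ k → ∑ w : Fin k → Fin N, LipPlus (compList S (List.ofFn w)) ^ sk k = 1)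
    (s : ℝ) (hs : Filter.Tendsto sk Filter.atTop (𝓝 s))
    (t : ℝ) (ht : max s (ubDim C) < t) :
    (∃ K : ℕ, ∀ k : ℕ, K < k → sk k < t) ∧
    (∀ k : ℕ, 1 ≤ k → ∀ FCk : Set X, IsCompact FCk → FCk.Nonempty →
      FCk = (⋃ w : Fin k → Fin N, compList S (List.ofFn w) '' FCk) ∪ C →
      ubDim FC = ubDim FCk) :=
  upper_box_dim_iterated_system_eventually_general S hS C FC hFCc hFCne hFC sk s hs t ht
end
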